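/- arXiv:1903.02998 — 2 statements merged into one kernel-verified Lean document; each statement's English description precedes it below -/
import Mathlib

section
/- Let u ∈ binom(ℕ,d). Then Inc(B(u)) = B(u+1), where B(u) is the initial segment of the Borel order determined by u and u+1 = (u_1+1,…,u_d+1). -/
def Inc1 : Set (ℕ → ℕ) := {π | StrictMono π ∧ ∀ j, π j ≤ j + 1}

def incF (F : Set (Finset ℕ)) : Set (Finset ℕ) :=
  {v | ∃ u ∈ F, ∃ π ∈ Inc1, v = u.image π}

def compressionIn (A : Set ℕ) (d n : ℕ) : Set (Finset ℕ) :=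
  {v | ↑v ⊆ A ∧ v.card = d ∧
    {w : Finset ℕ | ↑w ⊆ A ∧ w.card = d ∧ toColex w ≤ toColex v}.ncard ≤ n}

def IsCompressedIn (A : Set ℕ) (d : ℕ) (F : Set (Finset ℕ)) : Prop :=
  (∀ u ∈ F, ↑u ⊆ A ∧ u.card = d) ∧
  ∀ u ∈ F, ∀ v : Finset ℕ, ↑v ⊆ A → v.card = d → toColex v ≤ toColex u → v ∈ F

def hatL (F : Set (Finset ℕ)) (k : ℕ) : Set (Finset ℕ) :=
  {u | (∀ x ∈ u, k < x) ∧ insert k u ∈ F}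

def hatR (F : Set (Finset ℕ)) (k : ℕ) : Set (Finset ℕ) :=
  {u | (∀ x ∈ u, x < k) ∧ insert k u ∈ F}

def leftComp (d : ℕ) (F : Set (Finset ℕ)) : Set (Finset ℕ) :=
  ⋃ k : ℕ, {v | ∃ w ∈ compressionIn {j | k < j} (d - 1) (hatL F k).ncard, v = insert k w}

def rightComp (d : ℕ) (F : Set (Finset ℕ)) : Set (Finset ℕ) :=
  ⋃ k : ℕ, {v | ∃ w ∈ compressionIn Set.univ (d - 1) (hatR F k).ncard, v = insert k w}

def BorelLE (u v : Finset ℕ) : Prop :=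
  List.Forall₂ (· ≤ ·) (u.sort (· ≤ ·)) (v.sort (· ≤ ·))

def IsShifted (F : Set (Finset ℕ)) : Prop :=
  ∀ u ∈ F, ∀ v, BorelLE v u → v ∈ F

def piShift (i : ℕ) : ℕ → ℕ := fun j => if j < i then j else j + 1

def IsBinRep (d m s : ℕ) (a : ℕ → ℕ) : Prop :=
  1 ≤ s ∧ s ≤ d ∧ (∀ i, s ≤ i → i < d → a i < a (i + 1)) ∧ s ≤ a s ∧
    m = ∑ i ∈ Finset.Icc s d, Nat.choose (a i) i

def famLE (F G : Set (Finset ℕ)) : Prop :=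
  F = G ∨ ∃ m ∈ G, m ∉ F ∧
    ∀ w : Finset ℕ, (w ∈ F ∧ w ∉ G) ∨ (w ∈ G ∧ w ∉ F) → toColex w ≤ toColex m

def IsSimplicialComplex (Δ : Set (Finset ℕ)) : Prop :=
  Δ.Finite ∧ ∀ F ∈ Δ, ∀ G ⊆ F, G ∈ Δ

/-!
Everything is read off the increasing enumerations `i ↦ v i` of the sets. A strictly increasing
`π` sends the `i`-th element of `w` to the `i`-th element of `π w`, which gives
`Inc(B(u)) ⊆ B(u+1)`. Conversely let `v ≤_B u + 1`. If `i₀` is the first index with `u i₀ < v i₀`,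
then `c := u i₀` is missing from `v` (an element `v j = c` would have `j < i₀`, hence
`v j ≤ u j < u i₀`), the entries `v i` with `i < i₀` satisfy `v i ≤ u i`, and those with `i ≥ i₀`
exceed `c`. Writing `v = π w` for the map `π = piShift c` that skips `c` lowers exactly the
entries above `c` by one, so `w ≤_B u`.
-/

open Finset

theorem BorelLE.card_eq {v u : Finset ℕ} (h : BorelLE v u) : v.card = u.card := by
  simpa using h.length_eq

theorem borelLE_iff_orderEmbOfFin {k : ℕ} {v u : Finset ℕ} (hv : v.card = k) (hu : u.card = k) :
    BorelLE v u ↔ ∀ i, v.orderEmbOfFin hv i ≤ u.orderEmbOfFin hu i := by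
  simp [BorelLE, List.forall₂_iff_get, orderEmbOfFin_apply, hv, hu, Fin.forall_iff]

theorem Finset.orderEmbOfFin_image {α β : Type*} [LinearOrder α] [LinearOrder β] {f : α → β}
    (hf : StrictMono f) {s : Finset α} {k : ℕ} (hs : s.card = k) (i : Fin k) :
    (s.image f).orderEmbOfFin ((card_image_of_injective s hf.injective).trans hs) i =
      f (s.orderEmbOfFin hs i) := by
  rw [← orderEmbOfFin_unique _ (f := f ∘ s.orderEmbOfFin hs)
    (fun i => mem_image_of_mem f (orderEmbOfFin_mem s hs i))
    (hf.comp (s.orderEmbOfFin hs).strictMono)]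
  rfl

theorem borelLE_image_add_one_iff {k : ℕ} {v u : Finset ℕ} (hv : v.card = k) (hu : u.card = k) :
    BorelLE v (u.image (· + 1)) ↔ ∀ i, v.orderEmbOfFin hv i ≤ u.orderEmbOfFin hu i + 1 := by
  have hmono : StrictMono (· + 1 : ℕ → ℕ) := strictMono_id.add_const 1
  rw [borelLE_iff_orderEmbOfFin hv ((card_image_of_injective u hmono.injective).trans hu)]
  simp only [Finset.orderEmbOfFin_image hmono hu]

theorem strictMono_piShift (c : ℕ) : StrictMono (piShift c) := by
  intro a b hab
  simp only [piShift]
  split_ifs <;> omega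

theorem piShift_mem_Inc1 (c : ℕ) : piShift c ∈ Inc1 :=
  ⟨strictMono_piShift c, fun j => by simp only [piShift]; split_ifs <;> omega⟩

theorem range_piShift (c : ℕ) : Set.range (piShift c) = {c}ᶜ := by
  ext x
  simp only [Set.mem_range, piShift, Set.mem_compl_singleton_iff]
  constructor
  · rintro ⟨y, rfl⟩; split_ifs <;> omega
  · intro hx
    rcases lt_or_gt_of_ne hx with h | h
    · exact ⟨x, if_pos h⟩
    · exact ⟨x - 1, by rw [if_neg (by omega)]; omega⟩

theorem incF_borelLE_subset (u : Finset ℕ) :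
    incF {v | BorelLE v u} ⊆ {v | BorelLE v (u.image (· + 1))} := by
  rintro _ ⟨w, hw, π, ⟨hπ, hπ_le⟩, rfl⟩
  have hw_card : w.card = u.card := hw.card_eq
  rw [Set.mem_ofPred_eq,
    borelLE_image_add_one_iff ((card_image_of_injective w hπ.injective).trans hw_card) rfl]
  intro i
  rw [Finset.orderEmbOfFin_image hπ hw_card]
  exact (hπ_le _).trans (Nat.succ_le_succ ((borelLE_iff_orderEmbOfFin hw_card rfl).1 hw i))

theorem exists_notMem_forall_le_or_lt {k : ℕ} {v u : Finset ℕ} (hv : v.card = k)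
    (hu : u.card = k) :
    ∃ c ∉ v, ∀ i, v.orderEmbOfFin hv i ≤ u.orderEmbOfFin hu i ∨ c < v.orderEmbOfFin hv i := by
  by_cases hB : ∀ i, v.orderEmbOfFin hv i ≤ u.orderEmbOfFin hu i
  · obtain ⟨c, hc⟩ := Infinite.exists_notMem_finset v
    exact ⟨c, hc, fun i => Or.inl (hB i)⟩
  push Not at hB
  obtain ⟨i₀, hi₀, hmin⟩ :=
    wellFounded_lt.has_min {i | u.orderEmbOfFin hu i < v.orderEmbOfFin hv i} hB
  have hle_of_lt : ∀ i < i₀, v.orderEmbOfFin hv i ≤ u.orderEmbOfFin hu i :=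
    fun i hi => not_lt.1 fun h => hmin i h hi
  refine ⟨u.orderEmbOfFin hu i₀, fun hc => ?_, fun i => ?_⟩
  · obtain ⟨j, hj⟩ : u.orderEmbOfFin hu i₀ ∈ Set.range (v.orderEmbOfFin hv) := by
      rwa [range_orderEmbOfFin]
    have hji₀ : j < i₀ := (v.orderEmbOfFin hv).lt_iff_lt.1 (hj ▸ hi₀)
    have := (u.orderEmbOfFin hu).lt_iff_lt.2 hji₀
    have := hle_of_lt j hji₀
    omega
  · rcases lt_or_ge i i₀ with hi | hi
    · exact Or.inl (hle_of_lt i hi)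
    · exact Or.inr (hi₀.trans_le ((v.orderEmbOfFin hv).monotone hi))

theorem borelLE_image_add_one_subset_incF (u : Finset ℕ) :
    {v | BorelLE v (u.image (· + 1))} ⊆ incF {v | BorelLE v u} := by
  intro v hv
  have hv_card : v.card = u.card :=
    hv.card_eq.trans (card_image_of_injective u (add_left_injective 1))
  have hle := (borelLE_image_add_one_iff hv_card rfl).1 hv
  obtain ⟨c, hc, hgap⟩ := exists_notMem_forall_le_or_lt hv_card rfl
  obtain ⟨w, -, rfl⟩ : ∃ w : Finset ℕ, (w : Set ℕ) ⊆ Set.univ ∧ w.image (piShift c) = v := by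
    refine subset_set_image_iff.1 ?_
    rw [Set.image_univ, range_piShift]
    simpa using hc
  have hw_card : w.card = u.card :=
    (card_image_of_injective w (strictMono_piShift c).injective).symm.trans hv_card
  refine ⟨w, (borelLE_iff_orderEmbOfFin hw_card rfl).2 fun i => ?_, piShift c,
    piShift_mem_Inc1 c, rfl⟩
  have hwv := Finset.orderEmbOfFin_image (strictMono_piShift c) hw_card i
  have := hle i
  have := hgap i
  simp only [piShift] at hwv
  split_ifs at hwv <;> omega

theorem stmt3_general (u : Finset ℕ) :
    incF {v : Finset ℕ | BorelLE v u} = {v : Finset ℕ | BorelLE v (u.image (· + 1))} :=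
  (incF_borelLE_subset u).antisymm (borelLE_image_add_one_subset_incF u)

theorem stmt3 (d : ℕ) (hd : 1 ≤ d) (u : Finset ℕ) (hu : u.card = d) :
    incF {v : Finset ℕ | BorelLE v u} = {v : Finset ℕ | BorelLE v (u.image (· + 1))} :=
  stmt3_general u
end

section
/- Let Δ be a simplicial complex. If Δ is shifted (i.e., F_d(Δ) is a shifted family for every d ≥ 1), then Inc(Δ) is a shifted complex; if Δ is compressed (i.e., F_d(Δ) is a compressed family for every d ≥ 1), then Inc(Δ) is a compressed complex. -/
/-!
Every finite `v ⊆ ℕ` has a canonical `Inc`-preimage: if `g` is the least natural number not in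
`v`, then `unshift v` keeps the elements of `v` below `g` and lowers the others by one, and
`piShift g` maps it back onto `v`. Whenever `v` lies below `π(u)` for some `π ∈ Inc1`, in the
Borel order or (for sets of equal size) in colex, `unshift v` lies below `u` in the same order,
since `π(u) ≤ u + 1`. For the Borel order the elements of `v` below `g` occupy exactly the
first `g` positions of `v`; for colex, `unshift v + 1 = (v ∪ {g}) \ {0}` is the colex-smallest
set of size `#v` avoiding `0` that lies above `v`. So a shifted or compressed family `F`
contains `unshift v`, and `v ∈ Inc(F)`.
-/

open Finset

def gap (v : Finset ℕ) : ℕ := Nat.find (Infinite.exists_notMem_finset v)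

def piUnshift (g : ℕ) : ℕ → ℕ := fun x => if x < g then x else x - 1

def unshift (v : Finset ℕ) : Finset ℕ := v.image (piUnshift (gap v))

lemma gap_notMem (v : Finset ℕ) : gap v ∉ v := Nat.find_spec (Infinite.exists_notMem_finset v)

lemma gap_eq_zero {v : Finset ℕ} (h : 0 ∉ v) : gap v = 0 :=
  Nat.eq_zero_of_le_zero (Nat.find_min' _ h)

lemma mem_of_lt_gap {v : Finset ℕ} {x : ℕ} (h : x < gap v) : x ∈ v :=
  not_not.1 (Nat.find_min _ h)

lemma piShift_mem_inc1 (i : ℕ) : piShift i ∈ Inc1 :=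
  ⟨fun a b hab => by simp only [piShift]; split_ifs <;> omega,
    fun j => by simp only [piShift]; split_ifs <;> omega⟩

lemma piShift_piUnshift {g x : ℕ} (h : x ≠ g) : piShift g (piUnshift g x) = x := by
  simp only [piShift, piUnshift]; split_ifs <;> omega

lemma strictMonoOn_piUnshift (g : ℕ) : StrictMonoOn (piUnshift g) {x | x ≠ g} := by
  intro x (hx : x ≠ g) y (hy : y ≠ g) hxy
  simp only [piUnshift]; split_ifs <;> omega

lemma strictMonoOn_piUnshift_gap (v : Finset ℕ) : StrictMonoOn (piUnshift (gap v)) v :=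
  (strictMonoOn_piUnshift _).mono fun _ hx => ne_of_mem_of_not_mem hx (gap_notMem v)

lemma image_piShift_unshift (v : Finset ℕ) : (unshift v).image (piShift (gap v)) = v := by
  rw [unshift, image_image]
  conv_rhs => rw [← image_id (s := v)]
  exact image_congr fun x hx => piShift_piUnshift (ne_of_mem_of_not_mem hx (gap_notMem v))

lemma card_unshift (v : Finset ℕ) : #(unshift v) = #v :=
  card_image_of_injOn (strictMonoOn_piUnshift_gap v).injOn

lemma mem_incF_of_unshift_mem {F : Set (Finset ℕ)} {v : Finset ℕ} (h : unshift v ∈ F) :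
    v ∈ incF F :=
  ⟨_, h, _, piShift_mem_inc1 _, (image_piShift_unshift v).symm⟩

lemma Finset.sort_image_of_strictMonoOn {α β : Type*} [LinearOrder α] [LinearOrder β]
    {s : Finset α} {f : α → β} (hf : StrictMonoOn f s) : (s.image f).sort = s.sort.map f := by
  classical
  have hsorted : (s.sort.map f).Pairwise (· < ·) :=
    List.pairwise_map.2 <| s.sortedLT_sort.pairwise.imp_of_mem fun ha hb hab =>
      hf (mem_sort _ |>.1 ha) (mem_sort _ |>.1 hb) hab
  have himage : (s.sort.map f).toFinset = s.image f := by ext; simp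
  rw [← (List.toFinset_sort _ hsorted.nodup).2 (hsorted.imp le_of_lt), himage]

lemma sort_unshift (v : Finset ℕ) : (unshift v).sort = v.sort.map (piUnshift (gap v)) :=
  sort_image_of_strictMonoOn (strictMonoOn_piUnshift_gap v)

lemma List.SortedLT.le_getElem {l : List ℕ} (hl : l.SortedLT) {k : ℕ} (hk : k < l.length) :
    k ≤ l[k] := by
  induction k with
  | zero => omega
  | succ k ih =>
    have hstep : l[k] < l[k + 1] := hl.getElem_lt_getElem_iff.2 k.lt_succ_self
    have := ih (by omega)
    omega

lemma getElem_sort_of_lt_gap {v : Finset ℕ} {k : ℕ} (hk : k < v.sort.length)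
    (h : v.sort[k] < gap v) : v.sort[k] = k := by
  induction k using Nat.strong_induction_on with
  | _ k ih =>
  have hl := v.sortedLT_sort
  refine le_antisymm (not_lt.1 fun hlt => ?_) (hl.le_getElem hk)
  obtain ⟨j, hj, hjk⟩ :=
    List.mem_iff_getElem.1 ((mem_sort (· ≤ ·)).2 (mem_of_lt_gap (hlt.trans h)))
  have hjk' : j < k := hl.getElem_lt_getElem_iff.1 (by rw [hjk]; exact hlt)
  have := ih j hjk' hj (by omega)
  omega

lemma borelLE_unshift {u v : Finset ℕ}
    (h : List.Forall₂ (fun x y => x ≤ y + 1) v.sort u.sort) : BorelLE (unshift v) u := by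
  unfold BorelLE
  rw [sort_unshift, List.forall₂_map_left_iff, List.forall₂_iff_get]
  refine ⟨h.length_eq, fun k hk hk' => ?_⟩
  have hku := (List.forall₂_iff_get.1 h).2 k hk hk'
  simp only [List.get_eq_getElem, piUnshift] at hku ⊢
  split_ifs with hlt
  · rw [getElem_sort_of_lt_gap hk hlt]
    exact u.sortedLT_sort.le_getElem hk'
  · omega

lemma forall₂_sort_le_succ_of_borelLE_image {u v : Finset ℕ} {π : ℕ → ℕ} (hπ : π ∈ Inc1)
    (h : BorelLE v (u.image π)) : List.Forall₂ (fun x y => x ≤ y + 1) v.sort u.sort := by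
  unfold BorelLE at h
  rw [sort_image_of_strictMonoOn (hπ.1.strictMonoOn _), List.forall₂_map_right_iff] at h
  exact h.imp fun {_ y} hxy => hxy.trans (hπ.2 y)

lemma toColex_image_le_toColex_image_of_le {s : Finset ℕ} {f g : ℕ → ℕ} (hf : Set.InjOn f s)
    (hg : Set.InjOn g s) (h : ∀ x ∈ s, f x ≤ g x) : toColex (s.image f) ≤ toColex (s.image g) := by
  rw [← geomSum_le_geomSum_iff_toColex_le_toColex le_rfl, sum_image hf, sum_image hg]
  exact sum_le_sum fun x hx => Nat.pow_le_pow_right two_pos (h x hx)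

lemma zero_mem_insert_gap (v : Finset ℕ) : 0 ∈ insert (gap v) v := by
  by_cases h : 0 ∈ v
  · exact mem_insert_of_mem h
  · rw [gap_eq_zero h]
    exact mem_insert_self _ _

lemma card_erase_zero_insert_gap (v : Finset ℕ) : #((insert (gap v) v).erase 0) = #v := by
  rw [card_erase_of_mem (zero_mem_insert_gap v), card_insert_of_notMem (gap_notMem v)]
  rfl

lemma image_succ_unshift (v : Finset ℕ) :
    (unshift v).image Nat.succ = (insert (gap v) v).erase 0 := by
  ext y
  simp only [unshift, image_image, mem_image, mem_erase, mem_insert, Function.comp, piUnshift]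
  constructor
  · rintro ⟨x, hx, rfl⟩
    have hxg := ne_of_mem_of_not_mem hx (gap_notMem v)
    refine ⟨Nat.succ_ne_zero _, ?_⟩
    split_ifs with hlt
    · rcases (Nat.succ_le_of_lt hlt).eq_or_lt with h | h
      · exact Or.inl h
      · exact Or.inr (mem_of_lt_gap h)
    · exact Or.inr (by convert hx using 1; omega)
  · rintro ⟨hy0, hy⟩
    rcases le_or_gt y (gap v) with hle | hlt
    · exact ⟨y - 1, mem_of_lt_gap (by omega), by rw [if_pos (by omega)]; omega⟩
    · exact ⟨y, hy.resolve_left (by omega), by rw [if_neg (by omega)]; omega⟩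

lemma toColex_erase_zero_insert_gap_le {v t : Finset ℕ} (hcard : #v = #t) (ht : 0 ∉ t)
    (h : toColex v ≤ toColex t) : toColex ((insert (gap v) v).erase 0) ≤ toColex t := by
  set g := gap v
  have hmem : ∀ y, y ∈ (insert g v).erase 0 ↔ y ≠ 0 ∧ (y = g ∨ y ∈ v) := by simp
  rcases h.lt_or_eq with hlt | heq
  · obtain ⟨w, hw, hfilter⟩ := Colex.lt_iff_exists_filter_lt.1 hlt
    rw [mem_sdiff] at hw
    have hgw : g ≤ w := not_lt.1 fun hwg => hw.2 (mem_of_lt_gap hwg)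
    rcases hgw.lt_or_eq with hgw | rfl
    · refine (Colex.lt_iff_exists_filter_lt.2 ⟨w, mem_sdiff.2 ⟨hw.1, ?_⟩, ?_⟩).le
      · rw [hmem]
        rintro ⟨-, rfl | hwv⟩
        exacts [hgw.ne rfl, hw.2 hwv]
      · rw [← hfilter]
        ext a
        simp only [mem_filter, hmem]
        constructor
        · rintro ⟨⟨-, rfl | hav⟩, hwa⟩
          exacts [absurd hwa (not_lt.2 hgw.le), ⟨hav, hwa⟩]
        · rintro ⟨hav, hwa⟩
          exact ⟨⟨by omega, Or.inr hav⟩, hwa⟩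
    · have hts : t ⊆ (insert g v).erase 0 := by
        intro y hy
        refine (hmem y).2 ⟨ne_of_mem_of_not_mem hy ht, ?_⟩
        rcases lt_trichotomy y g with hyg | rfl | hyg
        · exact Or.inr (mem_of_lt_gap hyg)
        · exact Or.inl rfl
        · have : y ∈ ({a ∈ t | g < a} : Finset ℕ) := mem_filter.2 ⟨hy, hyg⟩
          rw [← hfilter] at this
          exact Or.inr (mem_filter.1 this).1
      rw [eq_of_subset_of_card_le hts (by rw [card_erase_zero_insert_gap, hcard])]
  · obtain rfl := toColex_inj.1 heq
    rw [show g = 0 from gap_eq_zero ht, erase_insert ht]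

lemma toColex_unshift_le {u v : Finset ℕ} (hcard : #v = #u)
    (h : toColex v ≤ toColex (u.image Nat.succ)) : toColex (unshift v) ≤ toColex u := by
  rw [← Colex.toColex_image_le_toColex_image fun _ _ => Nat.succ_lt_succ, image_succ_unshift]
  refine toColex_erase_zero_insert_gap_le ?_ (by simp) h
  rw [card_image_of_injective _ Nat.succ_injective, hcard]

lemma card_image_of_mem_inc1 {π : ℕ → ℕ} (hπ : π ∈ Inc1) (u : Finset ℕ) : #(u.image π) = #u :=
  card_image_of_injective u hπ.1.injective

lemma toColex_image_le_toColex_image_succ {π : ℕ → ℕ} (hπ : π ∈ Inc1) (u : Finset ℕ) :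
    toColex (u.image π) ≤ toColex (u.image Nat.succ) :=
  toColex_image_le_toColex_image_of_le hπ.1.injective.injOn Nat.succ_injective.injOn
    fun x _ => hπ.2 x

theorem stmt16_general (Δ : Set (Finset ℕ)) :
    ((∀ d : ℕ, 1 ≤ d → IsShifted {u ∈ Δ | u.card = d}) →
      ∀ d : ℕ, 1 ≤ d → IsShifted {u ∈ incF Δ | u.card = d}) ∧
    ((∀ d : ℕ, 1 ≤ d → IsCompressedIn Set.univ d {u ∈ Δ | u.card = d}) →
      ∀ d : ℕ, 1 ≤ d → IsCompressedIn Set.univ d {u ∈ incF Δ | u.card = d}) := by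
  constructor
  · rintro hΔ d hd w ⟨⟨u, hu, π, hπ, rfl⟩, hw⟩ v hvw
    have hv : #v = d := by
      rw [← hw, ← length_sort (· ≤ ·), ← length_sort (· ≤ ·)]
      exact hvw.length_eq
    rw [card_image_of_mem_inc1 hπ] at hw
    have hunshift := hΔ d hd u ⟨hu, hw⟩ _
      (borelLE_unshift (forall₂_sort_le_succ_of_borelLE_image hπ hvw))
    exact ⟨mem_incF_of_unshift_mem hunshift.1, hv⟩
  · intro hΔ d hd
    refine ⟨fun v hv => ⟨Set.subset_univ _, hv.2⟩, ?_⟩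
    rintro w ⟨⟨u, hu, π, hπ, rfl⟩, hw⟩ v - hv hvw
    rw [card_image_of_mem_inc1 hπ] at hw
    have hvu := hvw.trans (toColex_image_le_toColex_image_succ hπ u)
    have hunshift := (hΔ d hd).2 u ⟨hu, hw⟩ _ (Set.subset_univ _) (by rw [card_unshift, hv])
      (toColex_unshift_le (hv.trans hw.symm) hvu)
    exact ⟨mem_incF_of_unshift_mem hunshift.1, hv⟩

theorem stmt16 (Δ : Set (Finset ℕ)) (h : IsSimplicialComplex Δ) :
    ((∀ d : ℕ, 1 ≤ d → IsShifted {u ∈ Δ | u.card = d}) →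
      ∀ d : ℕ, 1 ≤ d → IsShifted {u ∈ incF Δ | u.card = d}) ∧
    ((∀ d : ℕ, 1 ≤ d → IsCompressedIn Set.univ d {u ∈ Δ | u.card = d}) →
      ∀ d : ℕ, 1 ≤ d → IsCompressedIn Set.univ d {u ∈ incF Δ | u.card = d}) :=
  stmt16_general Δ
end
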